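/- arXiv:1712.09894 — 2 statements merged into one kernel-verified Lean document; each statement's English description precedes it below -/
import Mathlib

section
/- Let δ > 0, θ > 0, and λ ∈ ℝ, and let s > 0 be a real number with s^δ > |λ|. Then the Laplace transform of t^{θ−1} E_{δ,θ}(−λ t^δ) equals s^{δ−θ}/(s^δ + λ); that is, ∫_0^∞ e^{−st} t^{θ−1} (∑_{k=0}^∞ (−λ)^k t^{δk} / Γ(δk + θ)) dt = s^{δ−θ}/(s^δ + λ). -/
/-!
The `k`-th term of the integrand is `(-λ)^k / Γ(δk+θ) · t^{δk+θ-1} e^{-st}`, whose integral is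
`(-λ)^k s^{-(δk+θ)}` by the Gamma integral. The same computation with `|λ|` in place of `-λ`
bounds the integrals of the absolute values by the geometric series `∑ |λ|^k s^{-(δk+θ)}`, which
converges because `|λ| < s^δ`; so the series may be integrated termwise, and the geometric series
`s^{-θ} ∑ (-λ s^{-δ})^k` sums to `s^{δ-θ}/(s^δ+λ)`.
-/

open MeasureTheory Real Set

section LaplaceMonomial

variable {b θ s : ℝ}

lemma laplace_monomial_eq_rpow_mul_exp {t : ℝ} (ht : 0 < t) (c : ℝ) :
    exp (-s * t) * (t ^ (θ - 1) * (c * t ^ b / Gamma (b + θ))) =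
      c / Gamma (b + θ) * (t ^ (b + θ - 1) * exp (-(s * t))) := by
  rw [show b + θ - 1 = θ - 1 + b by ring, rpow_add ht, neg_mul]
  ring

lemma norm_laplace_monomial (hbθ : 0 < b + θ) {t : ℝ} (ht : 0 < t) (c : ℝ) :
    ‖exp (-s * t) * (t ^ (θ - 1) * (c * t ^ b / Gamma (b + θ)))‖ =
      exp (-s * t) * (t ^ (θ - 1) * (|c| * t ^ b / Gamma (b + θ))) := by
  have := Gamma_pos_of_pos hbθ
  rw [norm_eq_abs, abs_mul, abs_mul, abs_div, abs_mul, abs_of_pos (exp_pos _),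
    abs_of_pos (rpow_pos_of_pos ht _), abs_of_pos (rpow_pos_of_pos ht _), abs_of_pos this]

lemma integrableOn_laplace_monomial (hbθ : 0 < b + θ) (hs : 0 < s) (c : ℝ) :
    IntegrableOn (fun t => exp (-s * t) * (t ^ (θ - 1) * (c * t ^ b / Gamma (b + θ))))
      (Ioi 0) := by
  have hpow : IntegrableOn (fun t : ℝ => t ^ (b + θ - 1) * exp (-s * t ^ (1 : ℝ))) (Ioi 0) :=
    integrableOn_rpow_mul_exp_neg_mul_rpow (by linarith) zero_lt_one hs
  refine IntegrableOn.congr_fun (hpow.const_mul (c / Gamma (b + θ))) (fun t ht => ?_)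
    measurableSet_Ioi
  rw [laplace_monomial_eq_rpow_mul_exp ht, rpow_one, neg_mul]

lemma integral_laplace_monomial (hbθ : 0 < b + θ) (hs : 0 < s) (c : ℝ) :
    ∫ t in Ioi 0, exp (-s * t) * (t ^ (θ - 1) * (c * t ^ b / Gamma (b + θ))) =
      c * s ^ (-(b + θ)) := by
  rw [setIntegral_congr_fun measurableSet_Ioi fun t ht => laplace_monomial_eq_rpow_mul_exp ht c,
    integral_const_mul, integral_rpow_mul_exp_neg_mul_Ioi hbθ hs, one_div, inv_rpow hs.le,
    ← rpow_neg hs.le]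
  field_simp [(Gamma_pos_of_pos hbθ).ne']

end LaplaceMonomial

lemma hasSum_pow_mul_rpow_neg {δ θ s c : ℝ} (hs : 0 < s) (hc : |c| < s ^ δ) :
    HasSum (fun k : ℕ => c ^ k * s ^ (-(δ * k + θ))) (s ^ (δ - θ) / (s ^ δ - c)) := by
  have hsδ : 0 < s ^ δ := rpow_pos_of_pos hs δ
  have hratio : ‖c * s ^ (-δ)‖ < 1 := by
    rw [norm_mul, norm_of_nonneg (rpow_pos_of_pos hs _).le, rpow_neg hs.le, Real.norm_eq_abs,
      mul_inv_lt_iff₀ hsδ, one_mul]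
    exact hc
  have hterm (k : ℕ) : c ^ k * s ^ (-(δ * k + θ)) = s ^ (-θ) * (c * s ^ (-δ)) ^ k := by
    rw [mul_pow, ← rpow_natCast (s ^ (-δ)), ← rpow_mul hs.le,
      show -(δ * k + θ) = -θ + -δ * k by ring, rpow_add hs]
    ring
  have hsum : s ^ (-θ) * (1 - c * s ^ (-δ))⁻¹ = s ^ (δ - θ) / (s ^ δ - c) := by
    have : s ^ δ - c ≠ 0 := by linarith [le_abs_self c]
    rw [rpow_neg hs.le, rpow_neg hs.le, rpow_sub hs]
    field_simp
  simpa only [hterm, hsum] using (hasSum_geometric_of_norm_lt_one hratio).mul_left (s ^ (-θ))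

/-- For `δ, θ > 0`, `λ ∈ ℝ` and `s > 0` with `s^δ > |λ|`, the Laplace transform of
`t^{θ−1} E_{δ,θ}(−λ t^δ)` equals `s^{δ−θ}/(s^δ + λ)`. -/
theorem laplace_mittagLeffler (δ θ lam s : ℝ) (hδ : 0 < δ) (hθ : 0 < θ)
    (hs : 0 < s) (hsδ : |lam| < s ^ δ) :
    ∫ t in Set.Ioi (0 : ℝ),
        Real.exp (-s * t) * (t ^ (θ - 1) *
          ∑' k : ℕ, (-lam) ^ k * t ^ (δ * k) / Real.Gamma (δ * k + θ)) =
      s ^ (δ - θ) / (s ^ δ + lam) := by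
  have hpos : ∀ k : ℕ, 0 < δ * k + θ := fun k => by positivity
  have hnorm_summable : Summable fun k : ℕ => ∫ t in Ioi 0,
      ‖exp (-s * t) * (t ^ (θ - 1) * ((-lam) ^ k * t ^ (δ * k) / Gamma (δ * k + θ)))‖ := by
    refine (hasSum_pow_mul_rpow_neg (θ := θ) hs (c := |lam|) (by rwa [abs_abs])).summable.congr
      fun k => ?_
    rw [setIntegral_congr_fun measurableSet_Ioi fun t ht => norm_laplace_monomial (hpos k) ht _,
      integral_laplace_monomial (hpos k) hs, abs_pow, abs_neg]
  calc _ = ∫ t in Ioi 0, ∑' k : ℕ,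
        exp (-s * t) * (t ^ (θ - 1) * ((-lam) ^ k * t ^ (δ * k) / Gamma (δ * k + θ))) := by
        simp_rw [tsum_mul_left]
    _ = ∑' k : ℕ, (-lam) ^ k * s ^ (-(δ * k + θ)) := by
        rw [← integral_tsum_of_summable_integral_norm
          (fun k => integrableOn_laplace_monomial (hpos k) hs _) hnorm_summable]
        exact tsum_congr fun k => integral_laplace_monomial (hpos k) hs _
    _ = s ^ (δ - θ) / (s ^ δ + lam) := by
        rw [(hasSum_pow_mul_rpow_neg hs (by rwa [abs_neg])).tsum_eq, sub_neg_eq_add]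
end

section
/- Let 0 < α < 1, let f : [0,∞) → ℝ be continuously differentiable with |f(t)| ≤ M e^{ct} and |f'(t)| ≤ M e^{ct} for some constants M > 0 and c ≥ 0, and let s > c. Then the Laplace transform of the left Caputo fractional derivative of f of order α satisfies L{^cD_{0+}^α f}(s) = s^α L{f}(s) − s^{α−1} f(0), where ^cD_{0+}^α f(t) = (1/Γ(1 − α)) ∫_0^t (t − u)^{−α} f'(u) du. -/
/-!
The Caputo derivative is the convolution on `[0, ∞)` of the kernel `v ^ (-α) / Γ(1 - α)` with
`f'`, so its Laplace transform is the product of the two Laplace transforms. The kernel has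
transform `s ^ (α - 1)` by the Gamma integral, and integration by parts gives
`L{f'}(s) = s L{f}(s) - f 0`, the boundary term at infinity vanishing because `f` has exponential
order `c < s`.
-/

open MeasureTheory Real Set Filter Topology
open scoped Convolution

noncomputable def laplace (f : ℝ → ℝ) (s : ℝ) : ℝ := ∫ t in Ioi 0, exp (-s * t) * f t

theorem integrableOn_exp_neg_mul_rpow {a s : ℝ} (ha : -1 < a) (hs : 0 < s) :
    IntegrableOn (fun v => exp (-s * v) * v ^ a) (Ioi 0) := by
  simpa [mul_comm] using integrableOn_rpow_mul_exp_neg_mul_rpow ha zero_lt_one hs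

theorem laplace_rpow_sub_one {a s : ℝ} (ha : 0 < a) (hs : 0 < s) :
    laplace (fun v => v ^ (a - 1)) s = s ^ (-a) * Gamma a := by
  rw [laplace, rpow_neg hs.le, ← inv_rpow hs.le, ← one_div,
    ← integral_rpow_mul_exp_neg_mul_Ioi ha hs]
  congr 1 with t
  rw [mul_comm, neg_mul]

theorem abs_exp_neg_mul_mul_le {x M c s t : ℝ} (hx : |x| ≤ M * exp (c * t)) :
    |exp (-s * t) * x| ≤ M * exp (-(s - c) * t) :=
  calc |exp (-s * t) * x| = exp (-s * t) * |x| := by rw [abs_mul, abs_exp]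
    _ ≤ exp (-s * t) * (M * exp (c * t)) := mul_le_mul_of_nonneg_left hx (exp_pos _).le
    _ = M * exp (-(s - c) * t) := by rw [mul_left_comm, ← exp_add]; ring_nf

section ExponentialOrder

variable {g : ℝ → ℝ} {M c s : ℝ}

theorem integrableOn_exp_neg_mul_of_abs_le (hg : AEStronglyMeasurable g (volume.restrict (Ioi 0)))
    (hbound : ∀ t, 0 ≤ t → |g t| ≤ M * exp (c * t)) (hs : c < s) :
    IntegrableOn (fun t => exp (-s * t) * g t) (Ioi 0) :=
  ((exp_neg_integrableOn_Ioi 0 (sub_pos.2 hs)).const_mul M).mono'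
    ((continuous_exp.comp (continuous_const_mul (-s))).aestronglyMeasurable.mul hg)
    ((ae_restrict_iff' measurableSet_Ioi).2 <| ae_of_all _ fun t ht =>
      abs_exp_neg_mul_mul_le (hbound t (le_of_lt ht)))

theorem tendsto_exp_neg_mul_of_abs_le (hbound : ∀ t, 0 ≤ t → |g t| ≤ M * exp (c * t))
    (hs : c < s) : Tendsto (fun t => exp (-s * t) * g t) atTop (𝓝 0) := by
  have hdecay : Tendsto (fun t => M * exp (-(s - c) * t)) atTop (𝓝 0) := by
    simpa only [Function.comp_def, id, mul_zero, neg_mul] using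
      (tendsto_exp_neg_atTop_nhds_zero.comp (tendsto_id.const_mul_atTop (sub_pos.2 hs))).const_mul M
  exact squeeze_zero_norm' ((eventually_ge_atTop 0).mono fun t ht =>
    abs_exp_neg_mul_mul_le (hbound t ht)) hdecay

end ExponentialOrder

theorem laplace_deriv {f f' : ℝ → ℝ} {s : ℝ} (hf : ∀ t ∈ Ici 0, HasDerivAt f (f' t) t)
    (hint : IntegrableOn (fun t => exp (-s * t) * f t) (Ioi 0))
    (hint' : IntegrableOn (fun t => exp (-s * t) * f' t) (Ioi 0))
    (hlim : Tendsto (fun t => exp (-s * t) * f t) atTop (𝓝 0)) :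
    laplace f' s = s * laplace f s - f 0 := by
  have hderiv : ∀ t ∈ Ici 0, HasDerivAt (fun t => exp (-s * t) * f t)
      (exp (-s * t) * f' t - s * (exp (-s * t) * f t)) t := fun t ht => by
    have hexp : HasDerivAt (fun t => exp (-s * t)) (exp (-s * t) * -s) t := by
      simpa using ((hasDerivAt_id t).const_mul (-s)).exp
    exact (hexp.mul (hf t ht)).congr_deriv (by ring)
  have hFTC :=
    integral_Ioi_of_hasDerivAt_of_tendsto' hderiv (hint'.sub (hint.const_mul s)) hlim
  rw [integral_sub hint' (hint.const_mul s), integral_const_mul] at hFTC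
  simp only [laplace, mul_zero, exp_zero, one_mul] at hFTC ⊢
  linarith

/- Since `exp (-s * u) * exp (-s * (t - u)) = exp (-s * t)`, the weighted truncated
convolution on `[0, ∞)` is an ordinary convolution on `ℝ` of such weighted functions, so Fubini
applies in the form of `integral_convolution`. -/
noncomputable def expWeight (s : ℝ) (f : ℝ → ℝ) : ℝ → ℝ :=
  (Ioi 0).indicator fun t => exp (-s * t) * f t

lemma expWeight_convolution_of_pos (k g : ℝ → ℝ) (s : ℝ) {t : ℝ} (ht : 0 < t) :
    (expWeight s g ⋆[ContinuousLinearMap.mul ℝ ℝ] expWeight s k) t =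
      exp (-s * t) * ∫ u in 0..t, k (t - u) * g u := by
  rw [convolution_mul, intervalIntegral.integral_of_le ht.le, integral_Ioc_eq_integral_Ioo,
    ← integral_const_mul, ← integral_indicator measurableSet_Ioo]
  congr 1 with u
  simp only [expWeight, indicator_apply, mem_Ioi, mem_Ioo, sub_pos]
  by_cases hu : 0 < u <;> by_cases hut : u < t <;> simp only [hu, hut, and_self, and_false,
    false_and, ↓reduceIte, mul_zero, zero_mul]
  rw [mul_mul_mul_comm, ← exp_add, mul_comm (g u)]
  ring_nf

lemma expWeight_convolution_of_nonpos (k g : ℝ → ℝ) (s : ℝ) {t : ℝ} (ht : t ≤ 0) :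
    (expWeight s g ⋆[ContinuousLinearMap.mul ℝ ℝ] expWeight s k) t = 0 := by
  rw [convolution_mul]
  refine integral_eq_zero_of_ae (ae_of_all _ fun u => ?_)
  by_cases hu : 0 < u
  · simp [expWeight, indicator_of_notMem (show t - u ∉ Ioi 0 by simp; linarith)]
  · simp [expWeight, indicator_of_notMem (show u ∉ Ioi 0 from hu)]

theorem laplace_convolution {k g : ℝ → ℝ} {s : ℝ}
    (hk : IntegrableOn (fun v => exp (-s * v) * k v) (Ioi 0))
    (hg : IntegrableOn (fun u => exp (-s * u) * g u) (Ioi 0)) :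
    laplace (fun t => ∫ u in 0..t, k (t - u) * g u) s = laplace k s * laplace g s := by
  calc laplace (fun t => ∫ u in 0..t, k (t - u) * g u) s
      = ∫ t in Ioi 0, (expWeight s g ⋆[ContinuousLinearMap.mul ℝ ℝ] expWeight s k) t :=
        setIntegral_congr_fun measurableSet_Ioi fun t ht =>
          (expWeight_convolution_of_pos k g s ht).symm
    _ = ∫ t, (expWeight s g ⋆[ContinuousLinearMap.mul ℝ ℝ] expWeight s k) t :=
        setIntegral_eq_integral_of_forall_compl_eq_zero fun t ht =>
          expWeight_convolution_of_nonpos k g s (not_lt.mp ht)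
    _ = laplace k s * laplace g s := by
        rw [integral_convolution (f := expWeight s g) (g := expWeight s k) _
          (hg.integrable_indicator measurableSet_Ioi) (hk.integrable_indicator measurableSet_Ioi)]
        simp only [expWeight, integral_indicator measurableSet_Ioi, laplace,
          ContinuousLinearMap.mul_apply', mul_comm]

theorem laplace_caputoDeriv_general (α : ℝ) (hα₂ : α < 1)
    (f : ℝ → ℝ) (hf : ContDiff ℝ 1 f) (M c : ℝ) (hc : 0 ≤ c)
    (hbound : ∀ t : ℝ, 0 ≤ t → |f t| ≤ M * Real.exp (c * t))
    (hbound' : ∀ t : ℝ, 0 ≤ t → |deriv f t| ≤ M * Real.exp (c * t))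
    (s : ℝ) (hs : c < s) :
    ∫ t in Set.Ioi (0 : ℝ),
        Real.exp (-s * t) *
          ((1 / Real.Gamma (1 - α)) * ∫ u in (0 : ℝ)..t, (t - u) ^ (-α) * deriv f u) =
      s ^ α * (∫ t in Set.Ioi (0 : ℝ), Real.exp (-s * t) * f t) -
        s ^ (α - 1) * f 0 := by
  have hs₀ : 0 < s := hc.trans_lt hs
  have hΓ : Gamma (1 - α) ≠ 0 := (Gamma_pos_of_pos (sub_pos.2 hα₂)).ne'
  have hf' : IntegrableOn (fun t => exp (-s * t) * deriv f t) (Ioi 0) :=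
    integrableOn_exp_neg_mul_of_abs_le
      (hf.continuous_deriv le_rfl).aestronglyMeasurable hbound' hs
  have hlaplace_deriv : laplace (deriv f) s = s * laplace f s - f 0 :=
    laplace_deriv (fun t _ => (hf.differentiable one_ne_zero t).hasDerivAt)
      (integrableOn_exp_neg_mul_of_abs_le hf.continuous.aestronglyMeasurable hbound hs) hf'
      (tendsto_exp_neg_mul_of_abs_le hbound hs)
  have hlaplace_kernel : laplace (fun v => v ^ (-α)) s = s ^ (α - 1) * Gamma (1 - α) := by
    simpa using laplace_rpow_sub_one (sub_pos.2 hα₂) hs₀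
  calc _ = 1 / Gamma (1 - α) *
        laplace (fun t => ∫ u in (0 : ℝ)..t, (t - u) ^ (-α) * deriv f u) s := by
        rw [laplace, ← integral_const_mul]
        congr 1 with t
        ring
    _ = 1 / Gamma (1 - α) * (laplace (fun v => v ^ (-α)) s * laplace (deriv f) s) := by
        rw [laplace_convolution (integrableOn_exp_neg_mul_rpow (by linarith) hs₀) hf']
    _ = _ := by
        rw [hlaplace_kernel, hlaplace_deriv, rpow_sub_one hs₀.ne', laplace]
        field_simp

/-- For `0 < α < 1`, `f` continuously differentiable with `|f(t)| ≤ M e^{ct}` and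
`|f'(t)| ≤ M e^{ct}` on `[0,∞)`, and `s > c`, the Laplace transform of the left
Caputo fractional derivative of `f` of order `α` satisfies
`L{ᶜD_{0+}^α f}(s) = s^α L{f}(s) − s^{α−1} f(0)`. -/
theorem laplace_caputoDeriv (α : ℝ) (hα₁ : 0 < α) (hα₂ : α < 1)
    (f : ℝ → ℝ) (hf : ContDiff ℝ 1 f) (M c : ℝ) (hM : 0 < M) (hc : 0 ≤ c)
    (hbound : ∀ t : ℝ, 0 ≤ t → |f t| ≤ M * Real.exp (c * t))
    (hbound' : ∀ t : ℝ, 0 ≤ t → |deriv f t| ≤ M * Real.exp (c * t))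
    (s : ℝ) (hs : c < s) :
    ∫ t in Set.Ioi (0 : ℝ),
        Real.exp (-s * t) *
          ((1 / Real.Gamma (1 - α)) * ∫ u in (0 : ℝ)..t, (t - u) ^ (-α) * deriv f u) =
      s ^ α * (∫ t in Set.Ioi (0 : ℝ), Real.exp (-s * t) * f t) -
        s ^ (α - 1) * f 0 :=
  laplace_caputoDeriv_general α hα₂ f hf M c hc hbound hbound' s hs
end
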